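/- (Error decomposition of the multilinear perturbation.) Let G, G* ∈ ℝ^{r₁×r₂×T₀}, U_i, U_i* ∈ ℝ^{N×r_i} with U_i*ᵀU_i* = b²I_{r_i}, and R_i ∈ ℝ^{r_i×r_i} orthogonal, for i = 1,2. Define A = G×₁U₁×₂U₂, A* = G*×₁U₁*×₂U₂*, A_G = (G − G*×₁R₁ᵀ×₂R₂ᵀ)×₁U₁×₂U₂, A_{U₁} = G×₁(U₁ − U₁*R₁)×₂U₂, and A_{U₂} = G×₁U₁×₂(U₂ − U₂*R₂). Suppose ‖U_i‖_op ≤ (1+c_e)σ_U^{1/4}, ‖G_{(i)}‖_op ≤ (1+c_e)σ_U^{1/2}, and there is B ≥ 0 with ‖G − G*×₁R₁ᵀ×₂R₂ᵀ‖_F ≤ B and ‖U_i − U_i*R_i‖_F ≤ B for i = 1,2. Then the residual H = A_G + A_{U₁} + A_{U₂} − (A − A*) satisfies ‖H‖_F ≤ [(1+c_e)σ_U^{1/2} + (2+c_e)σ_U^{1/4}]·B². -/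

import Mathlib

/-!
Put `D₁ = U₁ − U₁*R₁`, `D₂ = U₂ − U₂*R₂`, `V₁ = U₁*R₁` and `E = G − G*×₁R₁ᵀ×₂R₂ᵀ`. Since the `Rᵢ`
are orthogonal, `A* = (G − E)×₁V₁×₂(U₂*R₂)`, and expanding shows that all first-order terms
cancel: `H = E×₁D₁×₂U₂ + E×₁V₁×₂D₂ + G×₁D₁×₂D₂`. Each term is bounded by putting the Frobenius
norm on one factor and operator norms on the others, using that the Frobenius norm of a tensor is
that of either of its matricizations; `‖Dᵢ‖_op ≤ ‖Dᵢ‖_F` and `‖V₁‖_op ≤ b` then give the bound.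
-/

open Matrix

/-- Frobenius norm of a real matrix. -/
noncomputable def frob {m n : Type*} [Fintype m] [Fintype n] (M : Matrix m n ℝ) : ℝ :=
  Real.sqrt (∑ i, ∑ j, (M i j) ^ 2)

/-- Operator (spectral) norm of a real matrix, via its action between Euclidean spaces. -/
noncomputable def opNorm {m n : Type*} [Fintype m] [Fintype n] [DecidableEq m] [DecidableEq n]
    (A : Matrix m n ℝ) : ℝ :=
  ‖LinearMap.toContinuousLinearMap (Matrix.toEuclideanLin A)‖

/-- Mode-1 matricization of a third-order tensor given by its frontal slices. -/
def mat1 {r₁ r₂ T₀ : ℕ} (G : Fin T₀ → Matrix (Fin r₁) (Fin r₂) ℝ) :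
    Matrix (Fin r₁) (Fin T₀ × Fin r₂) ℝ :=
  fun i jk => G jk.1 i jk.2

/-- Mode-2 matricization of a third-order tensor given by its frontal slices. -/
def mat2 {r₁ r₂ T₀ : ℕ} (G : Fin T₀ → Matrix (Fin r₁) (Fin r₂) ℝ) :
    Matrix (Fin r₂) (Fin T₀ × Fin r₁) ℝ :=
  fun i jk => G jk.1 jk.2 i

section MatrixNorms

variable {m n p : Type*} [Fintype m] [Fintype n] [Fintype p]

open scoped Matrix.Norms.Frobenius in
theorem frob_eq_frobenius_norm (M : Matrix m n ℝ) : frob M = ‖M‖ := by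
  simp [frob, frobenius_norm_def, Real.sqrt_eq_rpow, Real.norm_eq_abs, sq_abs]

theorem frob_nonneg (M : Matrix m n ℝ) : 0 ≤ frob M := Real.sqrt_nonneg _

theorem frob_sq (M : Matrix m n ℝ) : frob M ^ 2 = ∑ i, ∑ j, M i j ^ 2 :=
  Real.sq_sqrt (by positivity)

open scoped Matrix.Norms.Frobenius in
theorem frob_add_le (M M' : Matrix m n ℝ) : frob (M + M') ≤ frob M + frob M' := by
  simpa only [frob_eq_frobenius_norm] using norm_add_le M M'

open scoped Matrix.Norms.Frobenius in
theorem frob_transpose (M : Matrix m n ℝ) : frob Mᵀ = frob M := by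
  simp only [frob_eq_frobenius_norm, frobenius_norm_transpose]

theorem frob_sq_eq_sum_norm_sq_col (M : Matrix m n ℝ) :
    frob M ^ 2 = ∑ j, ‖WithLp.toLp 2 (fun i => M i j)‖ ^ 2 := by
  rw [frob_sq, Finset.sum_comm]
  simp [EuclideanSpace.norm_sq_eq]

open scoped Matrix.Norms.L2Operator in
theorem opNorm_eq_l2_opNorm [DecidableEq m] [DecidableEq n] (A : Matrix m n ℝ) :
    opNorm A = ‖A‖ := rfl

theorem opNorm_nonneg [DecidableEq m] [DecidableEq n] (A : Matrix m n ℝ) : 0 ≤ opNorm A :=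
  norm_nonneg _

open scoped Matrix.Norms.L2Operator in
theorem opNorm_transpose [DecidableEq m] [DecidableEq n] (A : Matrix m n ℝ) :
    opNorm Aᵀ = opNorm A := by
  simp only [opNorm_eq_l2_opNorm, ← conjTranspose_eq_transpose_of_trivial,
    l2_opNorm_conjTranspose]

open scoped Matrix.Norms.L2Operator in
theorem opNorm_le_of_transpose_mul_self [DecidableEq m] [DecidableEq n] {V : Matrix m n ℝ}
    {c : ℝ} (hc : 0 ≤ c) (hV : Vᵀ * V = c ^ 2 • 1) : opNorm V ≤ c := by
  -- the C*-identity gives `‖1‖ = ‖1‖ * ‖1‖`; `‖1‖ = 1` would fail for empty `n`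
  have hone : ‖(1 : Matrix n n ℝ)‖ ≤ 1 := by
    have h := l2_opNorm_conjTranspose_mul_self (1 : Matrix n n ℝ)
    rw [conjTranspose_one, one_mul] at h
    nlinarith [norm_nonneg (1 : Matrix n n ℝ)]
  have : opNorm V * opNorm V ≤ c * c := by
    rw [opNorm_eq_l2_opNorm, ← l2_opNorm_conjTranspose_mul_self,
      conjTranspose_eq_transpose_of_trivial, hV]
    calc ‖c ^ 2 • (1 : Matrix n n ℝ)‖ ≤ ‖c ^ 2‖ * ‖(1 : Matrix n n ℝ)‖ := norm_smul_le _ _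
      _ ≤ c * c := by
        rw [Real.norm_of_nonneg (by positivity)]
        nlinarith [norm_nonneg (1 : Matrix n n ℝ)]
  exact (mul_self_le_mul_self_iff (opNorm_nonneg V) hc).2 this

open scoped Matrix.Norms.L2Operator in
theorem frob_mul_le_opNorm_mul_frob [DecidableEq m] [DecidableEq n] (A : Matrix m n ℝ)
    (M : Matrix n p ℝ) :
    frob (A * M) ≤ opNorm A * frob M := by
  refine (pow_le_pow_iff_left₀ (frob_nonneg _) (mul_nonneg (opNorm_nonneg A) (frob_nonneg M))
    two_ne_zero).1 ?_
  rw [mul_pow, frob_sq_eq_sum_norm_sq_col, frob_sq_eq_sum_norm_sq_col, Finset.mul_sum]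
  refine Finset.sum_le_sum fun j _ => ?_
  rw [← mul_pow]
  gcongr
  exact l2_opNorm_mulVec A (WithLp.toLp 2 fun i => M i j)

theorem frob_mul_le_frob_mul_opNorm [DecidableEq n] [DecidableEq p] (M : Matrix m n ℝ)
    (A : Matrix n p ℝ) :
    frob (M * A) ≤ frob M * opNorm A := by
  rw [← frob_transpose, transpose_mul, mul_comm, ← frob_transpose M, ← opNorm_transpose A]
  exact frob_mul_le_opNorm_mul_frob _ _

open scoped Matrix.Norms.Frobenius in
theorem opNorm_le_frob [DecidableEq m] [DecidableEq n] (A : Matrix m n ℝ) :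
    opNorm A ≤ frob A := by
  refine ContinuousLinearMap.opNorm_le_bound _ (frob_nonneg A) fun x => ?_
  have h := frobenius_norm_mul A (replicateCol Unit x.ofLp)
  rw [← replicateCol_mulVec, frobenius_norm_replicateCol, frobenius_norm_replicateCol] at h
  rw [frob_eq_frobenius_norm]
  exact h

end MatrixNorms

section Tensors

variable {N K r₁ r₂ T₀ : ℕ}

/-- The mode product `M ×₁ A ×₂ B`. -/
def modeProduct (M : Fin T₀ → Matrix (Fin r₁) (Fin r₂) ℝ) (A : Matrix (Fin N) (Fin r₁) ℝ)
    (B : Matrix (Fin K) (Fin r₂) ℝ) : Fin T₀ → Matrix (Fin N) (Fin K) ℝ :=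
  fun j => A * M j * Bᵀ

theorem mat2_eq_mat1_transpose (M : Fin T₀ → Matrix (Fin r₁) (Fin r₂) ℝ) :
    mat2 M = mat1 fun j => (M j)ᵀ := rfl

theorem frob_mat1 (M : Fin T₀ → Matrix (Fin r₁) (Fin r₂) ℝ) :
    frob (mat1 M) = √(∑ j, frob (M j) ^ 2) := by
  rw [frob]
  simp only [frob_sq, mat1, Fintype.sum_prod_type]
  rw [Finset.sum_comm]

theorem mat1_add (M M' : Fin T₀ → Matrix (Fin r₁) (Fin r₂) ℝ) :
    mat1 (M + M') = mat1 M + mat1 M' := rfl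

theorem frob_mat1_eq_frob_mat2 (M : Fin T₀ → Matrix (Fin r₁) (Fin r₂) ℝ) :
    frob (mat1 M) = frob (mat2 M) := by
  simp only [mat2_eq_mat1_transpose, frob_mat1, frob_transpose]

theorem mat1_mul_left (A : Matrix (Fin N) (Fin r₁) ℝ)
    (M : Fin T₀ → Matrix (Fin r₁) (Fin r₂) ℝ) :
    mat1 (fun j => A * M j) = A * mat1 M := by
  ext i jk
  simp [mat1, mul_apply]

theorem mat2_mul_transpose_right (M : Fin T₀ → Matrix (Fin r₁) (Fin r₂) ℝ)
    (B : Matrix (Fin K) (Fin r₂) ℝ) : mat2 (fun j => M j * Bᵀ) = B * mat2 M := by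
  simp only [mat2_eq_mat1_transpose, transpose_mul, transpose_transpose, mat1_mul_left]

theorem frob_mat1_modeProduct_le (M : Fin T₀ → Matrix (Fin r₁) (Fin r₂) ℝ)
    (A : Matrix (Fin N) (Fin r₁) ℝ) (B : Matrix (Fin K) (Fin r₂) ℝ) :
    frob (mat1 (modeProduct M A B)) ≤ opNorm A * frob (B * mat2 M) := by
  have h : mat1 (modeProduct M A B) = A * mat1 fun j => M j * Bᵀ := by
    rw [← mat1_mul_left]
    exact congrArg mat1 (funext fun j => Matrix.mul_assoc A (M j) Bᵀ)
  rw [h, ← mat2_mul_transpose_right, ← frob_mat1_eq_frob_mat2]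
  exact frob_mul_le_opNorm_mul_frob _ _

theorem frob_mat1_modeProduct_le_mul_frob {M : Fin T₀ → Matrix (Fin r₁) (Fin r₂) ℝ}
    {A : Matrix (Fin N) (Fin r₁) ℝ} {B : Matrix (Fin K) (Fin r₂) ℝ} {a β t : ℝ}
    (hA : opNorm A ≤ a) (hB : opNorm B ≤ β) (hM : frob (mat1 M) ≤ t) :
    frob (mat1 (modeProduct M A B)) ≤ a * β * t := by
  rw [frob_mat1_eq_frob_mat2] at hM
  have hBM : frob (B * mat2 M) ≤ β * t :=
    (frob_mul_le_opNorm_mul_frob B _).trans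
      (mul_le_mul hB hM (frob_nonneg _) ((opNorm_nonneg B).trans hB))
  rw [mul_assoc]
  exact (frob_mat1_modeProduct_le M A B).trans
    (mul_le_mul hA hBM (frob_nonneg _) ((opNorm_nonneg A).trans hA))

theorem frob_mat1_modeProduct_le_mul_opNorm_mat2 {M : Fin T₀ → Matrix (Fin r₁) (Fin r₂) ℝ}
    {A : Matrix (Fin N) (Fin r₁) ℝ} {B : Matrix (Fin K) (Fin r₂) ℝ} {a β t : ℝ}
    (hA : opNorm A ≤ a) (hB : frob B ≤ β) (hM : opNorm (mat2 M) ≤ t) :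
    frob (mat1 (modeProduct M A B)) ≤ a * β * t := by
  have hBM : frob (B * mat2 M) ≤ β * t :=
    (frob_mul_le_frob_mul_opNorm B _).trans
      (mul_le_mul hB hM (opNorm_nonneg _) ((frob_nonneg B).trans hB))
  rw [mul_assoc]
  exact (frob_mat1_modeProduct_le M A B).trans
    (mul_le_mul hA hBM (frob_nonneg _) ((opNorm_nonneg A).trans hA))

end Tensors

theorem residual_eq_sum_second_order {R m n r₁ r₂ : Type*} [CommRing R] [Fintype m] [Fintype n]
    [Fintype r₁] [Fintype r₂] [DecidableEq r₁] [DecidableEq r₂]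
    (U₁ U₁s : Matrix m r₁ R) (U₂ U₂s : Matrix n r₂ R)
    (R₁ : Matrix r₁ r₁ R) (R₂ : Matrix r₂ r₂ R)
    (G Gs : Matrix r₁ r₂ R) (hR₁ : R₁ᵀ * R₁ = 1) (hR₂ : R₂ᵀ * R₂ = 1) :
    U₁ * (G - R₁ᵀ * Gs * R₂) * U₂ᵀ + (U₁ - U₁s * R₁) * G * U₂ᵀ + U₁ * G * (U₂ - U₂s * R₂)ᵀ
        - (U₁ * G * U₂ᵀ - U₁s * Gs * U₂sᵀ) =
      (U₁ - U₁s * R₁) * (G - R₁ᵀ * Gs * R₂) * U₂ᵀ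
        + U₁s * R₁ * (G - R₁ᵀ * Gs * R₂) * (U₂ - U₂s * R₂)ᵀ
        + (U₁ - U₁s * R₁) * G * (U₂ - U₂s * R₂)ᵀ := by
  -- `U₁* G* U₂*ᵀ = (U₁* R₁)(R₁ᵀ G* R₂)(U₂* R₂)ᵀ`, after which both sides are the same polynomial
  have hGs : U₁s * Gs * U₂sᵀ = U₁s * R₁ * (R₁ᵀ * Gs * R₂) * (U₂s * R₂)ᵀ := by
    have h₁ : R₁ * R₁ᵀ = 1 := mul_eq_one_comm.mp hR₁
    have h₂ : R₂ * R₂ᵀ = 1 := mul_eq_one_comm.mp hR₂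
    simp only [transpose_mul, Matrix.mul_assoc]
    rw [← Matrix.mul_assoc R₂, h₂, Matrix.one_mul, ← Matrix.mul_assoc R₁, h₁, Matrix.one_mul]
  rw [hGs]
  simp only [transpose_sub, transpose_mul, Matrix.mul_sub, Matrix.sub_mul, Matrix.mul_assoc]
  abel

theorem perturbation_residual_bound_general {N r₁ r₂ T₀ : ℕ}
    (G Gstar : Fin T₀ → Matrix (Fin r₁) (Fin r₂) ℝ)
    (U₁ U₁s : Matrix (Fin N) (Fin r₁) ℝ) (U₂ U₂s : Matrix (Fin N) (Fin r₂) ℝ)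
    (R₁ : Matrix (Fin r₁) (Fin r₁) ℝ) (R₂ : Matrix (Fin r₂) (Fin r₂) ℝ)
    (b ce σU B : ℝ) (hb : 0 < b)
    (hU1s : U₁sᵀ * U₁s = (b ^ 2) • (1 : Matrix (Fin r₁) (Fin r₁) ℝ))
    (hR1 : R₁ᵀ * R₁ = 1) (hR2 : R₂ᵀ * R₂ = 1)
    (hU2 : opNorm U₂ ≤ (1 + ce) * σU ^ ((1 : ℝ) / 4))
    (hG2 : opNorm (mat2 G) ≤ (1 + ce) * σU ^ ((1 : ℝ) / 2))
    (hb4 : b ≤ σU ^ ((1 : ℝ) / 4))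
    (hGB : Real.sqrt (∑ j, (frob (G j - R₁ᵀ * Gstar j * R₂)) ^ 2) ≤ B)
    (hU1B : frob (U₁ - U₁s * R₁) ≤ B)
    (hU2B : frob (U₂ - U₂s * R₂) ≤ B) :
    Real.sqrt (∑ j, (frob
        (U₁ * (G j - R₁ᵀ * Gstar j * R₂) * U₂ᵀ
          + (U₁ - U₁s * R₁) * G j * U₂ᵀ
          + U₁ * G j * (U₂ - U₂s * R₂)ᵀ
          - (U₁ * G j * U₂ᵀ - U₁s * Gstar j * U₂sᵀ))) ^ 2) ≤
      ((1 + ce) * σU ^ ((1 : ℝ) / 2) + (2 + ce) * σU ^ ((1 : ℝ) / 4)) * B ^ 2 := by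
  let E := fun j => G j - R₁ᵀ * Gstar j * R₂
  let D₁ := U₁ - U₁s * R₁
  let D₂ := U₂ - U₂s * R₂
  have hE : frob (mat1 E) ≤ B := by rwa [frob_mat1]
  have hD₁ : opNorm D₁ ≤ B := (opNorm_le_frob D₁).trans hU1B
  have hD₂ : opNorm D₂ ≤ B := (opNorm_le_frob D₂).trans hU2B
  have hV₁ : opNorm (U₁s * R₁) ≤ σU ^ ((1 : ℝ) / 4) := by
    refine (opNorm_le_of_transpose_mul_self hb.le ?_).trans hb4
    rw [transpose_mul, Matrix.mul_assoc, ← Matrix.mul_assoc U₁sᵀ, hU1s, smul_mul, Matrix.one_mul,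
      Matrix.mul_smul, hR1]
  have h₁ := frob_mat1_modeProduct_le_mul_frob hD₁ hU2 hE
  have h₂ := frob_mat1_modeProduct_le_mul_frob hV₁ hD₂ hE
  have h₃ := frob_mat1_modeProduct_le_mul_opNorm_mat2 hD₁ hU2B hG2
  calc _ = frob (mat1 (modeProduct E D₁ U₂ + modeProduct E (U₁s * R₁) D₂
          + modeProduct G D₁ D₂)) := by
        rw [frob_mat1]
        simp only [residual_eq_sum_second_order _ _ _ _ _ _ _ _ hR1 hR2]
        rfl
    _ ≤ frob (mat1 (modeProduct E D₁ U₂)) + frob (mat1 (modeProduct E (U₁s * R₁) D₂))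
          + frob (mat1 (modeProduct G D₁ D₂)) := by
        simp only [mat1_add]
        exact (frob_add_le _ _).trans (add_le_add_left (frob_add_le _ _) _)
    _ ≤ _ := by linarith

/-- Error decomposition of the multilinear perturbation (Lemma B.9): the residual
`H = A_G + A_{U₁} + A_{U₂} − (A − A*)` of the first-order expansion of the Tucker map
satisfies `‖H‖_F ≤ [(1+c_e)σ_U^{1/2} + (2+c_e)σ_U^{1/4}]·B²`, where the frontal slices
of the tensors involved are `A_j = U₁ G_j U₂ᵀ`, `A*_j = U₁* G*_j U₂*ᵀ`,
`(A_G)_j = U₁(G_j − R₁ᵀ G*_j R₂)U₂ᵀ`, `(A_{U₁})_j = (U₁ − U₁*R₁) G_j U₂ᵀ`,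
`(A_{U₂})_j = U₁ G_j (U₂ − U₂*R₂)ᵀ`. -/
theorem perturbation_residual_bound {N r₁ r₂ T₀ : ℕ}
    (G Gstar : Fin T₀ → Matrix (Fin r₁) (Fin r₂) ℝ)
    (U₁ U₁s : Matrix (Fin N) (Fin r₁) ℝ) (U₂ U₂s : Matrix (Fin N) (Fin r₂) ℝ)
    (R₁ : Matrix (Fin r₁) (Fin r₁) ℝ) (R₂ : Matrix (Fin r₂) (Fin r₂) ℝ)
    (b ce σU B : ℝ) (hb : 0 < b) (hce : 0 < ce) (hσ : 0 < σU) (hB : 0 ≤ B)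
    (hU1s : U₁sᵀ * U₁s = (b ^ 2) • (1 : Matrix (Fin r₁) (Fin r₁) ℝ))
    (hU2s : U₂sᵀ * U₂s = (b ^ 2) • (1 : Matrix (Fin r₂) (Fin r₂) ℝ))
    (hR1 : R₁ᵀ * R₁ = 1) (hR2 : R₂ᵀ * R₂ = 1)
    (hU1 : opNorm U₁ ≤ (1 + ce) * σU ^ ((1 : ℝ) / 4))
    (hU2 : opNorm U₂ ≤ (1 + ce) * σU ^ ((1 : ℝ) / 4))
    (hG1 : opNorm (mat1 G) ≤ (1 + ce) * σU ^ ((1 : ℝ) / 2))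
    (hG2 : opNorm (mat2 G) ≤ (1 + ce) * σU ^ ((1 : ℝ) / 2))
    (hb4 : b ≤ σU ^ ((1 : ℝ) / 4))
    (hGB : Real.sqrt (∑ j, (frob (G j - R₁ᵀ * Gstar j * R₂)) ^ 2) ≤ B)
    (hU1B : frob (U₁ - U₁s * R₁) ≤ B)
    (hU2B : frob (U₂ - U₂s * R₂) ≤ B) :
    Real.sqrt (∑ j, (frob
        (U₁ * (G j - R₁ᵀ * Gstar j * R₂) * U₂ᵀ
          + (U₁ - U₁s * R₁) * G j * U₂ᵀ
          + U₁ * G j * (U₂ - U₂s * R₂)ᵀ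
          - (U₁ * G j * U₂ᵀ - U₁s * Gstar j * U₂sᵀ))) ^ 2) ≤
      ((1 + ce) * σU ^ ((1 : ℝ) / 2) + (2 + ce) * σU ^ ((1 : ℝ) / 4)) * B ^ 2 :=
  perturbation_residual_bound_general G Gstar U₁ U₁s U₂ U₂s R₁ R₂ b ce σU B hb hU1s hR1 hR2 hU2 hG2
    hb4 hGB hU1B hU2B
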